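/- Let N+ be a rooted binary phylogenetic network on a taxon set X with |X| ≥ 3. Then every 3-element subset of X determines a blob of N+. -/

import Mathlib

/-!
# Common framework

Finite directed multigraphs, undirected connectivity, numbers of connected
components, cut edges, subgraphs, blobs, blobs determined by leaf sets,
B-quartets, and quartets displayed via cut-edge separation.

A *network* is modelled as a finite directed multigraph (edge directions are
simply ignored for the undirected notions of connectivity, cut edges and
blobs).
-/

/-- A finite directed multigraph: finite types of nodes and of edges, with
source and target maps. -/
structure MDigraph where
  V : Type
  E : Type
  finV : Finite V
  finE : Finite E
  src : E → V
  tgt : E → V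

attribute [instance] MDigraph.finV MDigraph.finE

namespace MDigraph

section Basic

variable (G : MDigraph)

/-- One undirected step between `u` and `v` along an edge from the set `F`. -/
def Step (F : Set G.E) (u v : G.V) : Prop :=
  ∃ e ∈ F, (G.src e = u ∧ G.tgt e = v) ∨ (G.src e = v ∧ G.tgt e = u)

/-- Undirected reachability (an undirected path) using only edges in `F`. -/
def Conn (F : Set G.E) (u v : G.V) : Prop :=
  Relation.ReflTransGen (G.Step F) u v

/-- One directed step from `u` to `v` along an edge from the set `F`. -/
def DStep (F : Set G.E) (u v : G.V) : Prop :=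
  ∃ e ∈ F, G.src e = u ∧ G.tgt e = v

/-- Directed reachability (a directed path) using only edges in `F`. -/
def DConn (F : Set G.E) (u v : G.V) : Prop :=
  Relation.ReflTransGen (G.DStep F) u v

/-- `u` is above (ancestral to) `v`: there is a directed path from `u` to `v`. -/
def Above (u v : G.V) : Prop := G.DConn Set.univ u v

/-- In-degree of a node. -/
noncomputable def inDeg (v : G.V) : ℕ := Nat.card {e : G.E // G.tgt e = v}

/-- Out-degree of a node. -/
noncomputable def outDeg (v : G.V) : ℕ := Nat.card {e : G.E // G.src e = v}

/-- Undirected degree of a node (a loop counts twice). -/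
noncomputable def degree (v : G.V) : ℕ := G.inDeg v + G.outDeg v

/-- The number of connected components of the graph with node set `W` and edge
set the restriction to `W` of `F` (two nodes of `W` lie in the same connected
component iff they are joined by an undirected path). -/
noncomputable def numComponents (W : Set G.V) (F : Set G.E) : ℕ :=
  Nat.card (Quot (fun u v : W => G.Step {e ∈ F | G.src e ∈ W ∧ G.tgt e ∈ W} u.1 v.1))

/-- `v` lies on every directed path from `u` to `w`: there is no directed path
from `u` to `w` all of whose nodes avoid `v`. -/
def OnEveryPath (v u w : G.V) : Prop :=
  ¬ (u ≠ v ∧ w ≠ v ∧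
      Relation.ReflTransGen (fun a b => G.DStep Set.univ a b ∧ a ≠ v ∧ b ≠ v) u w)

end Basic

/-- A subgraph (subnetwork): a set of nodes together with a set of edges
joining them. -/
structure Subgraph (G : MDigraph) where
  verts : Set G.V
  edges : Set G.E
  src_mem : ∀ e ∈ edges, G.src e ∈ verts
  tgt_mem : ∀ e ∈ edges, G.tgt e ∈ verts

/-- The whole graph, as a subgraph of itself. -/
def top (G : MDigraph) : Subgraph G :=
  ⟨Set.univ, Set.univ, fun _ _ => Set.mem_univ _, fun _ _ => Set.mem_univ _⟩

namespace Subgraph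

variable {G : MDigraph}

/-- Containment of subgraphs. -/
def le (H K : Subgraph G) : Prop := H.verts ⊆ K.verts ∧ H.edges ⊆ K.edges

/-- The subgraph `H` is connected. -/
def IsConnected (H : Subgraph G) : Prop :=
  H.verts.Nonempty ∧ ∀ u ∈ H.verts, ∀ v ∈ H.verts, G.Conn H.edges u v

/-- Delete an edge from a subgraph. -/
def deleteEdge (H : Subgraph G) (e : G.E) : Subgraph G :=
  ⟨H.verts, H.edges \ {e}, fun e' he' => H.src_mem e' he'.1,
    fun e' he' => H.tgt_mem e' he'.1⟩

/-- The number of connected components of a subgraph. -/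
noncomputable def numComponents (H : Subgraph G) : ℕ :=
  G.numComponents H.verts H.edges

/-- `e` is a cut edge of the (sub)graph `H`: deleting it increases the number
of connected components. -/
def IsCutEdge (H : Subgraph G) (e : G.E) : Prop :=
  e ∈ H.edges ∧ H.numComponents < (H.deleteEdge e).numComponents

end Subgraph

variable {G : MDigraph}

/-- `B` is a blob of the network `H`: a maximal connected subnetwork of `H`
having no cut edges.  (A blob is *trivial* if it consists of a single node.) -/
def IsBlobIn (H B : Subgraph G) : Prop :=
  B.le H ∧ B.IsConnected ∧ (∀ e, ¬ B.IsCutEdge e) ∧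
    ∀ B' : Subgraph G, B'.le H → B'.IsConnected → (∀ e, ¬ B'.IsCutEdge e) →
      B.le B' → B'.le B

/-- `e` is a cut edge of the network `H` incident to the blob `B`: exactly one
of its endpoints is a node of `B`. -/
def IncidentCut (H B : Subgraph G) (e : G.E) : Prop :=
  H.IsCutEdge e ∧ Xor' (G.src e ∈ B.verts) (G.tgt e ∈ B.verts)

/-- The blob `B` of the network `H` is determined by the set `S` of leaf
labels: deletion of the cut edges of `H` incident to `B` leaves the nodes
labelled by the elements of `S` in distinct connected components. -/
def DeterminesIn {X : Type} (H B : Subgraph G) (leaf : X → G.V) (S : Set X) : Prop :=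
  ∀ s ∈ S, ∀ t ∈ S, s ≠ t →
    ¬ G.Conn {e ∈ H.edges | ¬ IncidentCut H B e} (leaf s) (leaf t)

/-- Four taxa form a B-quartet on the network `H`: some blob of `H` is
determined by them. -/
def BQuartetIn {X : Type} (H : Subgraph G) (leaf : X → G.V) (a b c d : X) : Prop :=
  ∃ B : Subgraph G, IsBlobIn H B ∧ DeterminesIn H B leaf ({a, b, c, d} : Set X)

/-- Some cut edge of `H` separates the taxa `p, q` from the taxa `r, s`: after
its deletion `p, q` lie in one connected component and `r, s` in another.  For
a 4-taxon set `{p,q,r,s}` this says exactly that the (reduced unrooted) tree of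
blobs of `H` displays the resolved quartet `pq|rs` (the edges of the tree of
blobs correspond exactly to the cut edges of the network, and suppressing
degree-2 nodes or contracting blobs does not affect which taxa a cut edge
separates). -/
def CutSep {X : Type} (H : Subgraph G) (leaf : X → G.V) (p q r s : X) : Prop :=
  ∃ e, H.IsCutEdge e ∧
    G.Conn (H.edges \ {e}) (leaf p) (leaf q) ∧
    G.Conn (H.edges \ {e}) (leaf r) (leaf s) ∧
    ¬ G.Conn (H.edges \ {e}) (leaf p) (leaf r)

end MDigraph
open MDigraph in
/-- A rooted binary phylogenetic network on the taxon set `X`: a connected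
directed acyclic graph whose node set consists of a root (in-degree 0,
out-degree 2), leaves (in-degree 1, out-degree 0) bijectively labelled by `X`,
tree nodes (in-degree 1, out-degree 2) and hybrid nodes (in-degree 2,
out-degree 1). -/
structure PhyloNetwork (X : Type) extends MDigraph where
  root : toMDigraph.V
  leaf : X → toMDigraph.V
  leaf_inj : Function.Injective leaf
  root_in : toMDigraph.inDeg root = 0
  root_out : toMDigraph.outDeg root = 2
  leaf_in : ∀ x, toMDigraph.inDeg (leaf x) = 1
  leaf_out : ∀ x, toMDigraph.outDeg (leaf x) = 0
  internal : ∀ v, v ≠ root → (∀ x, v ≠ leaf x) →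
      (toMDigraph.inDeg v = 1 ∧ toMDigraph.outDeg v = 2) ∨
      (toMDigraph.inDeg v = 2 ∧ toMDigraph.outDeg v = 1)
  acyclic : ∀ v, ¬ Relation.TransGen (toMDigraph.DStep Set.univ) v v
  conn : ∀ u v, toMDigraph.Conn Set.univ u v

namespace PhyloNetwork

open MDigraph

variable {X : Type} (N : PhyloNetwork X)

/-- The subnetwork of `N⁺` consisting of all nodes and edges ancestral to at
least one taxon in `Y`.  Since suppressing nodes of in- and out-degree 1
affects neither blobs, nor cut edges, nor which sets of taxa they separate,
this subnetwork faithfully represents the induced network `N⁺_Y`. -/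
def inducedSub (Y : Set X) : Subgraph N.toMDigraph where
  verts := {v | ∃ y ∈ Y, N.toMDigraph.Above v (N.leaf y)}
  edges := {e | ∃ y ∈ Y, N.toMDigraph.Above (N.toMDigraph.tgt e) (N.leaf y)}
  src_mem := by
    rintro e ⟨y, hy, h⟩
    exact ⟨y, hy, Relation.ReflTransGen.head ⟨e, Set.mem_univ e, rfl, rfl⟩ h⟩
  tgt_mem := by
    rintro e ⟨y, hy, h⟩
    exact ⟨y, hy, h⟩

/-- `v` is a stable ancestor of the leaves: it is ancestral to every leaf and
lies on every directed path from the root to any leaf. -/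
def IsStableAncestor (v : N.toMDigraph.V) : Prop :=
  (∀ x, N.toMDigraph.Above v (N.leaf x)) ∧
  ∀ x, N.toMDigraph.OnEveryPath v N.root (N.leaf x)

/-- `v` is the lowest stable ancestor (LSA) of the network: a stable ancestor
below all stable ancestors. -/
def IsLSA (v : N.toMDigraph.V) : Prop :=
  N.IsStableAncestor v ∧ ∀ u, N.IsStableAncestor u → N.toMDigraph.Above u v

/-- The number of cut edges of `N⁺` incident to the blob `B`. -/
noncomputable def blobDeg (B : Subgraph N.toMDigraph) : ℕ :=
  Nat.card {e : N.toMDigraph.E // IncidentCut (top N.toMDigraph) B e}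

/-- `B` is an `m`-blob of the rooted network `N⁺`: if the root is not in `B`
then `B` has exactly `m` incident cut edges, while if the root is in `B` then
`B` has exactly `m - 1` incident cut edges. -/
def IsMBlob (B : Subgraph N.toMDigraph) (m : ℕ) : Prop :=
  IsBlobIn (top N.toMDigraph) B ∧
    ((N.root ∈ B.verts ∧ m = N.blobDeg B + 1) ∨ (N.root ∉ B.verts ∧ m = N.blobDeg B))

end PhyloNetwork

open MDigraph

/-!
Contracting the blobs of a connected graph leaves a tree whose edges are the cut edges, and
three leaves have a median in it: a vertex `m` such that every cut edge keeps `m` on the side of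
at least two of them. Such an `m` is reached from any vertex by repeatedly crossing a cut edge
that leaves the current vertex on the minority side; by laminarity of the sides of cut edges
this strictly shrinks the set of such edges.

The blob `B` of `m` is determined by the three leaves. A leaf is alone in its blob because its
only edge is a cut edge, so at most one of two leaves `s ≠ t` lies in `B`; say `s ∉ B`. A path
from `m` to `s` leaves `B` for the last time through a cut edge `e` incident to `B`, and `e`
separates `m` from `s`. By the median property `e` keeps `m` on the side of `t`, so `s` and `t`
are separated once the cut edges incident to `B` are deleted.
-/

theorem eq_or_eq_of_ncard_le_three {α : Type*} [Finite α] {T : Set α} (hT : T.ncard ≤ 3)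
    {x y p q : α} (hx : x ∈ T) (hy : y ∈ T) (hp : p ∈ T) (hq : q ∈ T) (hxy : x ≠ y)
    (hpq : p ≠ q) : p = x ∨ p = y ∨ q = x ∨ q = y := by
  by_contra! h
  have hcard : ({p, q, x, y} : Set α).ncard = 4 := by
    rw [Set.ncard_insert_of_notMem, Set.ncard_insert_of_notMem, Set.ncard_pair hxy] <;>
      simp only [Set.mem_insert_iff, Set.mem_singleton_iff, not_or] <;> grind
  have := Set.ncard_le_ncard (by simp [Set.insert_subset_iff, *] : ({p, q, x, y} : Set α) ⊆ T)
  omega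

namespace MDigraph

variable {G : MDigraph} {F : Set G.E} {e f g : G.E} {u v w x y z : G.V}

def Links (G : MDigraph) (e : G.E) (u v : G.V) : Prop :=
  (G.src e = u ∧ G.tgt e = v) ∨ (G.src e = v ∧ G.tgt e = u)

theorem links_src_tgt (e : G.E) : G.Links e (G.src e) (G.tgt e) := Or.inl ⟨rfl, rfl⟩

theorem Links.symm (h : G.Links e u v) : G.Links e v u := Or.symm h

theorem Links.eq_or_eq (h : G.Links e x y) (h' : G.Links e u v) :
    (x = u ∧ y = v) ∨ (x = v ∧ y = u) := by
  unfold Links at h h'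
  grind

theorem Conn.refl : G.Conn F u u := Relation.ReflTransGen.refl

theorem Conn.trans (h : G.Conn F u v) (h' : G.Conn F v w) : G.Conn F u w :=
  Relation.ReflTransGen.trans h h'

theorem Conn.symm (h : G.Conn F u v) : G.Conn F v u := by
  induction h with
  | refl => exact Conn.refl
  | tail _ hstep ih =>
    obtain ⟨e, he, hl⟩ := hstep
    exact Relation.ReflTransGen.head ⟨e, he, Links.symm hl⟩ ih

theorem Conn.mono {F' : Set G.E} (h : G.Conn F u v) (hF : F ⊆ F') : G.Conn F' u v :=
  Relation.ReflTransGen.mono (fun _ _ ⟨e, he, hl⟩ => ⟨e, hF he, hl⟩) _ _ h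

theorem Links.conn (hl : G.Links e u v) (he : e ∈ F) : G.Conn F u v :=
  Relation.ReflTransGen.single ⟨e, he, hl⟩

theorem Links.conn_of_conn_src_tgt (hl : G.Links e u v) (h : G.Conn F (G.src e) (G.tgt e)) :
    G.Conn F u v := by
  rcases hl with ⟨rfl, rfl⟩ | ⟨rfl, rfl⟩
  exacts [h, h.symm]

theorem Links.conn_src_tgt (hl : G.Links e u v) (h : G.Conn F u v) :
    G.Conn F (G.src e) (G.tgt e) := by
  rcases hl with ⟨rfl, rfl⟩ | ⟨rfl, rfl⟩
  exacts [h, h.symm]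

theorem eq_of_conn_of_forall_not_links (hv : ∀ e ∈ F, ∀ w, ¬ G.Links e v w)
    (h : G.Conn F v z) : z = v := by
  rcases h.cases_head with hvz | ⟨c, ⟨e, he, hl⟩, -⟩
  exacts [hvz.symm, absurd hl (hv e he c)]

/-- A path using `f` splits at its first use of `f` and its last. -/
theorem Conn.diff_singleton_or (h : G.Conn F u v) (f : G.E) :
    G.Conn (F \ {f}) u v ∨
      ∃ x y, G.Links f x y ∧ G.Conn (F \ {f}) u x ∧ G.Conn (F \ {f}) y v := by
  induction h with
  | refl => exact Or.inl Conn.refl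
  | tail _ hstep ih =>
    obtain ⟨g, hg, hgl⟩ := hstep
    by_cases hgf : g = f
    · subst hgf
      rcases ih with hub | ⟨x, y, hxy, hux, hyb⟩
      · exact Or.inr ⟨_, _, hgl, hub, Conn.refl⟩
      · rcases hxy.eq_or_eq hgl with ⟨rfl, rfl⟩ | ⟨rfl, rfl⟩
        exacts [Or.inl (hux.trans hyb.symm), Or.inl hux]
    · have hstep' : G.Step (F \ {f}) _ _ := ⟨g, ⟨hg, hgf⟩, hgl⟩
      rcases ih with hub | ⟨x, y, hxy, hux, hyb⟩
      exacts [Or.inl (hub.tail hstep'), Or.inr ⟨x, y, hxy, hux, hyb.tail hstep'⟩]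

theorem Conn.diff_singleton_of_conn (h : G.Conn F u v)
    (he : G.Conn (F \ {e}) (G.src e) (G.tgt e)) : G.Conn (F \ {e}) u v := by
  induction h with
  | refl => exact Conn.refl
  | tail _ hstep ih =>
    obtain ⟨g, hg, hgl⟩ := hstep
    by_cases hge : g = e
    · subst hge
      exact ih.trans (Links.conn_of_conn_src_tgt hgl he)
    · exact ih.tail ⟨g, ⟨hg, hge⟩, hgl⟩

theorem Conn.diff_singleton_of_not_conn (h : G.Conn F u v) (hg : ¬ G.Conn F (G.src g) v) :
    G.Conn (F \ {g}) u v := by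
  induction h using Relation.ReflTransGen.head_induction_on with
  | refl => exact Conn.refl
  | head hstep hrest ih =>
    obtain ⟨e, he, hl⟩ := hstep
    by_cases heg : e = g
    · subst heg
      have hpv : G.Conn F _ v := Relation.ReflTransGen.head ⟨e, he, hl⟩ hrest
      rcases hl with ⟨hs, -⟩ | ⟨hs, -⟩
      exacts [(hg (hs ▸ hpv)).elim, (hg (hs ▸ hrest)).elim]
    · exact Relation.ReflTransGen.head ⟨e, ⟨he, heg⟩, hl⟩ ih

theorem Conn.restrict_component (h : G.Conn F u v) :
    G.Conn {e ∈ F | G.Conn F u (G.src e)} u v := by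
  induction h with
  | refl => exact Conn.refl
  | tail hub hstep ih =>
    obtain ⟨g, hg, hgl⟩ := hstep
    have hsrc : G.Conn F u (G.src g) := by
      rcases hgl with ⟨hs, -⟩ | ⟨hs, ht⟩
      exacts [hs ▸ hub, hs ▸ hub.tail ⟨g, hg, Or.inr ⟨hs, ht⟩⟩]
    exact ih.tail ⟨g, ⟨hg, hsrc⟩, hgl⟩

theorem Conn.exists_exit {S : Set G.V} (h : G.Conn F u v) (hu : u ∈ S) (hv : v ∉ S) :
    ∃ e ∈ F, ∃ x y, G.Links e x y ∧ x ∈ S ∧ y ∉ S ∧ G.Conn (F \ {e}) y v := by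
  induction h with
  | refl => exact absurd hu hv
  | @tail b c _ hstep ih =>
    obtain ⟨g, hg, hgl⟩ := hstep
    by_cases hb : b ∈ S
    · exact ⟨g, hg, b, c, hgl, hb, hv, Conn.refl⟩
    · obtain ⟨e, he, x, y, hexy, hx, hy, hyb⟩ := ih hb
      have hge : g ≠ e := by
        rintro rfl
        rcases hexy.eq_or_eq hgl with ⟨rfl, -⟩ | ⟨rfl, -⟩
        exacts [hb hx, hv hx]
      exact ⟨e, he, x, y, hexy, hx, hy, hyb.tail ⟨g, ⟨hg, hge⟩, hgl⟩⟩

theorem conn_or_conn_of_links (hG : ∀ u v : G.V, G.Conn Set.univ u v) (hl : G.Links f x y)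
    (w : G.V) : G.Conn (Set.univ \ {f}) w x ∨ G.Conn (Set.univ \ {f}) w y := by
  rcases (hG w x).diff_singleton_or f with h | ⟨x', y', hxy', hwx', -⟩
  · exact Or.inl h
  · rcases hxy'.eq_or_eq hl with ⟨rfl, -⟩ | ⟨rfl, -⟩
    exacts [Or.inl hwx', Or.inr hwx']

def IsBridge (G : MDigraph) (e : G.E) : Prop :=
  ¬ G.Conn (Set.univ \ {e}) (G.src e) (G.tgt e)

def nonBridges (G : MDigraph) : Set G.E := {e | ¬ G.IsBridge e}

theorem nonBridges_subset_diff (he : G.IsBridge e) : G.nonBridges ⊆ Set.univ \ {e} :=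
  fun _ hf => ⟨trivial, fun hfe => hf (hfe ▸ he)⟩

/-- The edges of a minimal path from `src e` to `tgt e` avoiding `e` lie on a cycle with `e`. -/
theorem conn_nonBridges_diff_of_not_isBridge (he : ¬ G.IsBridge e) :
    G.Conn (G.nonBridges \ {e}) (G.src e) (G.tgt e) := by
  obtain ⟨F, ⟨hFe, hF⟩, hFmin⟩ := exists_minimal_of_wellFoundedLT
    (fun F : Set G.E => F ⊆ Set.univ \ {e} ∧ G.Conn F (G.src e) (G.tgt e))
    ⟨_, subset_rfl, not_not.mp he⟩
  refine hF.mono fun f hf => ⟨fun hfb => hfb ?_, (hFe hf).2⟩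
  have hne : ¬ G.Conn (F \ {f}) (G.src e) (G.tgt e) := fun h =>
    (hFmin ⟨Set.sdiff_subset.trans hFe, h⟩ Set.sdiff_subset hf).2 rfl
  obtain ⟨x, y, hxy, hx, hy⟩ := (hF.diff_singleton_or f).resolve_left hne
  have hsub : F \ {f} ⊆ Set.univ \ {f} := fun _ hg => ⟨trivial, hg.2⟩
  have hef : e ∈ Set.univ \ {f} := ⟨trivial, fun h => (hFe (h ▸ hf)).2 rfl⟩
  exact hxy.conn_src_tgt
    (((hx.mono hsub).symm.trans ((links_src_tgt e).conn hef)).trans (hy.mono hsub).symm)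

theorem eq_of_conn_nonBridges_of_pendant (hsrc : ∀ e, G.src e ≠ v)
    (htgt : ∀ e e', G.tgt e = v → G.tgt e' = v → e = e') (h : G.Conn G.nonBridges v z) :
    z = v := by
  refine eq_of_conn_of_forall_not_links (fun e he w hl => ?_) h
  rcases hl with ⟨hs, -⟩ | ⟨-, ht⟩
  · exact hsrc e hs
  · refine he fun hc => hsrc e (eq_of_conn_of_forall_not_links (fun e' he' w' hl' => ?_)
      (ht ▸ hc.symm))
    rcases hl' with ⟨hs', -⟩ | ⟨-, ht'⟩
    exacts [hsrc e' hs', he'.2 (htgt e' e ht' ht)]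

namespace Subgraph

variable {H : Subgraph G}

theorem edges_restrict (H : Subgraph G) :
    {e ∈ H.edges | G.src e ∈ H.verts ∧ G.tgt e ∈ H.verts} = H.edges :=
  Set.sep_eq_self_iff_mem_true.mpr fun e he => ⟨H.src_mem e he, H.tgt_mem e he⟩

theorem numComponents_eq_card (H : Subgraph G) :
    H.numComponents = Nat.card (Quot fun u v : H.verts => G.Step H.edges u.1 v.1) := by
  rw [numComponents, MDigraph.numComponents, edges_restrict]

theorem quot_mk_eq_iff {u v : H.verts} :
    Quot.mk (fun u v : H.verts => G.Step H.edges u.1 v.1) u = Quot.mk _ v ↔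
      G.Conn H.edges u v := by
  constructor
  · intro h
    replace h := Quot.eq.mp h
    induction h with
    | rel _ _ hr => exact Relation.ReflTransGen.single hr
    | refl => exact Conn.refl
    | symm _ _ _ ih => exact ih.symm
    | trans _ _ _ _ _ ih ih' => exact ih.trans ih'
  · intro h
    obtain ⟨u, hu⟩ := u
    obtain ⟨v, hv⟩ := v
    change G.Conn H.edges u v at h
    induction h with
    | refl => rfl
    | @tail b c _ hstep ih =>
      obtain ⟨e, he, hl⟩ := hstep
      have hb : b ∈ H.verts := by
        rcases hl with ⟨rfl, -⟩ | ⟨-, rfl⟩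
        exacts [H.src_mem e he, H.tgt_mem e he]
      exact (ih hb).trans (Quot.sound ⟨e, he, hl⟩)

theorem numComponents_eq_one_iff : H.numComponents = 1 ↔ H.IsConnected := by
  rw [numComponents_eq_card, Nat.card_eq_one_iff_unique]
  constructor
  · rintro ⟨hsub, ⟨q⟩⟩
    obtain ⟨⟨u, hu⟩, -⟩ := q.exists_rep
    exact ⟨⟨u, hu⟩, fun u hu v hv =>
      quot_mk_eq_iff.mp (Subsingleton.elim (Quot.mk _ ⟨u, hu⟩) (Quot.mk _ ⟨v, hv⟩))⟩
  · rintro ⟨⟨u, hu⟩, hconn⟩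
    refine ⟨⟨fun p q => ?_⟩, ⟨Quot.mk _ ⟨u, hu⟩⟩⟩
    induction p using Quot.ind
    induction q using Quot.ind
    exact quot_mk_eq_iff.mpr (hconn _ (Subtype.prop _) _ (Subtype.prop _))

theorem numComponents_pos (hne : H.verts.Nonempty) : 0 < H.numComponents := by
  obtain ⟨u, hu⟩ := hne
  rw [numComponents_eq_card, Nat.card_pos_iff]
  exact ⟨⟨Quot.mk _ ⟨u, hu⟩⟩, inferInstance⟩

theorem isCutEdge_iff (hH : H.IsConnected) :
    H.IsCutEdge e ↔ e ∈ H.edges ∧ ¬ (H.deleteEdge e).IsConnected := by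
  have hpos : 0 < (H.deleteEdge e).numComponents := numComponents_pos hH.1
  rw [IsCutEdge, numComponents_eq_one_iff.mpr hH, ← numComponents_eq_one_iff]
  constructor <;> rintro ⟨he, h⟩ <;> exact ⟨he, by omega⟩

end Subgraph

theorem isCutEdge_top_of_isBridge (hG : ∀ u v : G.V, G.Conn Set.univ u v)
    (he : G.IsBridge e) : (top G).IsCutEdge e :=
  (Subgraph.isCutEdge_iff (H := top G) ⟨⟨G.src e, trivial⟩, fun u _ v _ => hG u v⟩).mpr
    ⟨trivial, fun h => he (h.2 _ trivial _ trivial)⟩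

def bridgelessComponent (G : MDigraph) (m : G.V) : Set G.V := {u | G.Conn G.nonBridges m u}

def blobAt (G : MDigraph) (m : G.V) : Subgraph G where
  verts := G.bridgelessComponent m
  edges := {e ∈ G.nonBridges | G.Conn G.nonBridges m (G.src e)}
  src_mem _ he := he.2
  tgt_mem e he := he.2.trans ((links_src_tgt e).conn he.1)

theorem blobAt_isConnected (m : G.V) : (G.blobAt m).IsConnected :=
  ⟨⟨m, Conn.refl⟩, fun _ hu _ hv => hu.restrict_component.symm.trans hv.restrict_component⟩

theorem blobAt_not_isCutEdge (m : G.V) (e : G.E) : ¬ (G.blobAt m).IsCutEdge e := by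
  rw [Subgraph.isCutEdge_iff (blobAt_isConnected m), not_and, not_not]
  intro he
  have hm : ∀ u ∈ G.bridgelessComponent m, G.Conn ((G.blobAt m).edges \ {e}) m u :=
    fun u hu => ((hu.diff_singleton_of_conn (conn_nonBridges_diff_of_not_isBridge he.1)
      ).restrict_component).mono fun f hf =>
        ⟨⟨hf.1.1, hf.2.mono Set.sdiff_subset⟩, hf.1.2⟩
  exact ⟨⟨m, Conn.refl⟩, fun u hu v hv => (hm u hu).symm.trans (hm v hv)⟩

theorem isBlobIn_blobAt (m : G.V) : IsBlobIn (top G) (G.blobAt m) := by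
  refine ⟨⟨Set.subset_univ _, Set.subset_univ _⟩, blobAt_isConnected m,
    blobAt_not_isCutEdge m, fun B _ hB hBcut hle => ?_⟩
  have hnb : B.edges ⊆ G.nonBridges := fun e he hbr => by
    have hdel : (B.deleteEdge e).IsConnected := by
      by_contra h
      exact hBcut e ((Subgraph.isCutEdge_iff hB).mpr ⟨he, h⟩)
    exact hbr ((hdel.2 _ (B.src_mem e he) _ (B.tgt_mem e he)).mono
      fun f hf => ⟨trivial, hf.2⟩)
  have hverts : B.verts ⊆ G.bridgelessComponent m :=
    fun u hu => (hB.2 m (hle.1 Conn.refl) u hu).mono hnb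
  exact ⟨hverts, fun e he => ⟨hnb he, hverts (B.src_mem e he)⟩⟩

/-- `u` lies on the side of the edge `f` that contains all but at most one vertex of `T`. -/
def OnMajoritySide (G : MDigraph) (T : Set G.V) (f : G.E) (u : G.V) : Prop :=
  ∀ x ∈ T, ∀ y ∈ T, x ≠ y → G.Conn (Set.univ \ {f}) u x ∨ G.Conn (Set.univ \ {f}) u y

def IsMedian (G : MDigraph) (T : Set G.V) (m : G.V) : Prop :=
  ∀ f, G.IsBridge f → G.OnMajoritySide T f m

def minorityBridges (G : MDigraph) (T : Set G.V) (u : G.V) : Set G.E :=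
  {f | G.IsBridge f ∧ ¬ G.OnMajoritySide T f u}

variable {T : Set G.V}

theorem OnMajoritySide.of_conn (h : G.OnMajoritySide T f u)
    (hzu : G.Conn (Set.univ \ {f}) z u) : G.OnMajoritySide T f z :=
  fun x hx y hy hxy => (h x hx y hy hxy).imp hzu.trans hzu.trans

theorem onMajoritySide_of_conn_pair (hT : T.ncard ≤ 3) (hx : x ∈ T) (hy : y ∈ T)
    (hxy : x ≠ y) (hzx : G.Conn (Set.univ \ {f}) z x) (hzy : G.Conn (Set.univ \ {f}) z y) :
    G.OnMajoritySide T f z := by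
  intro p hp q hq hpq
  rcases eq_or_eq_of_ncard_le_three hT hx hy hp hq hxy hpq with rfl | rfl | rfl | rfl
  exacts [Or.inl hzx, Or.inl hzy, Or.inr hzx, Or.inr hzy]

theorem exists_minorityBridges_ssubset (hG : ∀ u v : G.V, G.Conn Set.univ u v)
    (hT : T.ncard ≤ 3) (hf : f ∈ G.minorityBridges T u) :
    ∃ z, G.minorityBridges T z ⊂ G.minorityBridges T u := by
  have ⟨hfb, hfu⟩ := hf
  simp only [OnMajoritySide, not_forall, not_or] at hfu
  obtain ⟨x, hx, y, hy, hxy, hux, huy⟩ := hfu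
  obtain ⟨z₀, z₁, hf01, hu0⟩ :
      ∃ z₀ z₁, G.Links f z₀ z₁ ∧ G.Conn (Set.univ \ {f}) u z₀ := by
    rcases conn_or_conn_of_links hG (links_src_tgt f) u with h | h
    exacts [⟨_, _, links_src_tgt f, h⟩, ⟨_, _, (links_src_tgt f).symm, h⟩]
  have hsep : ¬ G.Conn (Set.univ \ {f}) z₀ z₁ := fun h => hfb (hf01.conn_src_tgt h)
  have hfar : ∀ w, ¬ G.Conn (Set.univ \ {f}) u w → G.Conn (Set.univ \ {f}) w z₁ :=
    fun w hw => (conn_or_conn_of_links hG hf01 w).resolve_left fun h => hw (hu0.trans h.symm)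
  have hz₁ : G.OnMajoritySide T f z₁ :=
    onMajoritySide_of_conn_pair hT hx hy hxy (hfar x hux).symm (hfar y huy).symm
  have hsub : G.minorityBridges T z₁ ⊆ G.minorityBridges T u := by
    rintro g ⟨hgb, hgz⟩
    refine ⟨hgb, fun hgu => hgz ?_⟩
    have hgf : g ≠ f := by rintro rfl; exact hgz hz₁
    have hdiff : (Set.univ \ {f}) \ {g} ⊆ Set.univ \ {g} := fun _ h => ⟨trivial, h.2⟩
    rcases conn_or_conn_of_links hG hf01 (G.src g) with hg0 | hg1
    · -- `g` lies on `u`'s side of `f`, so it does not separate `z₁` from `x` and `y`.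
      have hg1 : ¬ G.Conn (Set.univ \ {f}) (G.src g) z₁ := fun h => hsep (hg0.symm.trans h)
      have hlift : ∀ w, ¬ G.Conn (Set.univ \ {f}) u w → G.Conn (Set.univ \ {g}) z₁ w :=
        fun w hw => (((hfar w hw).diff_singleton_of_not_conn hg1).mono hdiff).symm
      exact onMajoritySide_of_conn_pair hT hx hy hxy (hlift x hux) (hlift y huy)
    · -- `g` lies beyond `f`, so it does not separate `z₁` from `u`.
      have hg0 : ¬ G.Conn (Set.univ \ {f}) (G.src g) z₀ := fun h => hsep (h.symm.trans hg1)
      have hu0' : G.Conn (Set.univ \ {g}) u z₀ := (hu0.diff_singleton_of_not_conn hg0).mono hdiff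
      have hf' : f ∈ Set.univ \ {g} := ⟨trivial, hgf.symm⟩
      exact hgu.of_conn ((hf01.conn hf').symm.trans hu0'.symm)
  exact ⟨z₁, (Set.ssubset_iff_of_subset hsub).mpr ⟨f, hf, fun h => h.2 hz₁⟩⟩

theorem exists_isMedian [Nonempty G.V] (hG : ∀ u v : G.V, G.Conn Set.univ u v)
    (hT : T.ncard ≤ 3) : ∃ m, G.IsMedian T m := by
  obtain ⟨m, hmin⟩ := Finite.exists_min fun u => (G.minorityBridges T u).ncard
  refine ⟨m, fun f hf => by_contra fun hfm => ?_⟩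
  obtain ⟨z, hz⟩ := exists_minorityBridges_ssubset hG hT ⟨hf, hfm⟩
  exact (Set.ncard_lt_ncard hz).not_ge (hmin z)

theorem not_conn_of_isMedian (hG : ∀ u v : G.V, G.Conn Set.univ u v) {m s t : G.V}
    (hm : G.IsMedian T m) (hs : s ∈ T) (ht : t ∈ T) (hst : s ≠ t)
    (hsm : s ∉ G.bridgelessComponent m) :
    ¬ G.Conn {e ∈ (top G).edges | ¬ IncidentCut (top G) (G.blobAt m) e} s t := by
  intro hK
  obtain ⟨e, -, x, y, hxy, hx, hy, hys⟩ := (hG m s).exists_exit (Conn.refl : m ∈ _) hsm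
  have he : G.IsBridge e := by
    by_contra hne
    exact hy (hx.trans (hxy.conn hne))
  have hms : ¬ G.Conn (Set.univ \ {e}) m s := fun h =>
    he (hxy.conn_src_tgt (((hx.mono (nonBridges_subset_diff he)).symm.trans h).trans hys.symm))
  have hmt : G.Conn (Set.univ \ {e}) m t := (hm e he s hs t ht hst).resolve_left hms
  have hinc : IncidentCut (top G) (G.blobAt m) e := by
    refine ⟨isCutEdge_top_of_isBridge hG he, ?_⟩
    rcases hxy with ⟨rfl, rfl⟩ | ⟨rfl, rfl⟩
    exacts [Or.inl ⟨hx, hy⟩, Or.inr ⟨hx, hy⟩]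
  have hKe : {e' ∈ (top G).edges | ¬ IncidentCut (top G) (G.blobAt m) e'} ⊆ Set.univ \ {e} :=
    fun f hf => ⟨trivial, fun hfe => hf.2 (hfe ▸ hinc)⟩
  exact hms (hmt.trans (hK.mono hKe).symm)

end MDigraph

namespace PhyloNetwork

variable {X : Type} (N : PhyloNetwork X)

theorem eq_leaf_of_conn_nonBridges (x : X) {z : N.V}
    (h : N.Conn N.nonBridges (N.leaf x) z) : z = N.leaf x := by
  have hsrc : IsEmpty {e : N.E // N.src e = N.leaf x} :=
    Finite.card_eq_zero_iff.mp (N.leaf_out x)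
  have htgt : Subsingleton {e : N.E // N.tgt e = N.leaf x} :=
    (Nat.card_eq_one_iff_unique.mp (N.leaf_in x)).1
  exact eq_of_conn_nonBridges_of_pendant (fun e he => hsrc.false ⟨e, he⟩)
    (fun e e' he he' => congrArg Subtype.val
      (Subsingleton.elim (α := {e // N.tgt e = N.leaf x}) ⟨e, he⟩ ⟨e', he'⟩)) h

end PhyloNetwork

theorem stmt_9_general {X : Type} (N : PhyloNetwork X) (a b c : X) :
    ∃ B : Subgraph N.toMDigraph, IsBlobIn (top N.toMDigraph) B ∧
      DeterminesIn (top N.toMDigraph) B N.leaf ({a, b, c} : Set X) := by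
  have : Nonempty N.V := ⟨N.root⟩
  have hT : (N.leaf '' {a, b, c}).ncard ≤ 3 :=
    (Set.ncard_image_le (Set.toFinite _)).trans <| (Set.ncard_insert_le _ _).trans <| by
      grw [Set.ncard_insert_le, Set.ncard_singleton]
  obtain ⟨m, hm⟩ := exists_isMedian N.conn hT
  refine ⟨N.blobAt m, isBlobIn_blobAt m, fun s hs t ht hst => ?_⟩
  have hleaf : N.leaf s ≠ N.leaf t := N.leaf_inj.ne hst
  have hout : N.leaf s ∉ N.bridgelessComponent m ∨ N.leaf t ∉ N.bridgelessComponent m := by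
    by_contra! h
    exact hleaf ((N.eq_leaf_of_conn_nonBridges s h.1.symm).symm.trans
      (N.eq_leaf_of_conn_nonBridges t h.2.symm))
  rcases hout with hsm | htm
  · exact not_conn_of_isMedian N.conn hm (Set.mem_image_of_mem _ hs)
      (Set.mem_image_of_mem _ ht) hleaf hsm
  · exact fun h => not_conn_of_isMedian N.conn hm (Set.mem_image_of_mem _ ht)
      (Set.mem_image_of_mem _ hs) hleaf.symm htm h.symm

/-- Let `N⁺` be a rooted binary phylogenetic network on a taxon set `X` with
`|X| ≥ 3` (witnessed by three distinct taxa).  Then every 3-element subset of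
`X` determines a blob of `N⁺`. -/
theorem stmt_9 {X : Type} (N : PhyloNetwork X) (a b c : X)
    (hab : a ≠ b) (hac : a ≠ c) (hbc : b ≠ c) :
    ∃ B : Subgraph N.toMDigraph, IsBlobIn (top N.toMDigraph) B ∧
      DeterminesIn (top N.toMDigraph) B N.leaf ({a, b, c} : Set X) :=
  stmt_9_general N a b c
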